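/- arXiv:1812.09129 — 5 statements merged into one kernel-verified Lean document; each statement's English description precedes it below -/
import Mathlib

section
/- Let n be a natural number and let f : ℍ → ℍ be S-polyregular of level n in decomposed form, f(q) = ∑_{k=0}^{n} q̄^k·φ_k(q) with each φ_k entire slice regular. Then for every I ∈ 𝕊 and all x, y ∈ ℝ, writing q = x + I·y and g_I(x,y) = f(x + I·y), one has f(q) = φ_0(q) + ∑_{j=1}^{n} ∑_{k=0}^{n−j} (−1)^k · (q̄^{j+k}/(j!·k!)) · ((∂̄_I)^{j+k} g_I)(x,y), where ∂̄_I h := (1/2)(∂h/∂x + I·(∂h/∂y)) with I multiplying on the left. -/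
/-!
On the slice through `I`, the conjugate `q̄ = x - yI` satisfies `∂̄_I q̄ = 1`, and an entire slice
regular `φ` satisfies the Cauchy–Riemann equation `∂̄_I (φ ∘ slice) = 0` (differentiate its power
series termwise). Since every point of the slice commutes with `I`, `∂̄_I` obeys the Leibniz rule
on products `q̄ʲ φ(q)`, so `(∂̄_I)ˡ g_I = ∑ₘ m(m-1)⋯(m-l+1) q̄^(m-l) φₘ(q)`. Substituting this, the
coefficient of `q̄ᵐ φₘ(q)` on the right-hand side is
`∑_{j ≥ 1} ∑ₖ (-1)ᵏ C(m,j) C(m-j,k) = ∑_{j ≥ 1} C(m,j) [j = m] = [m ≥ 1]`.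
-/

open scoped Quaternion

noncomputable section

/-- The conjugate slice derivative `∂̄_I h = (1/2)(∂h/∂x + I·∂h/∂y)` for `h : ℝ² → ℍ`,
with `I` multiplying on the left. -/
def dbar (I : ℍ[ℝ]) (g : ℝ × ℝ → ℍ[ℝ]) : ℝ × ℝ → ℍ[ℝ] :=
  fun p => (1/2 : ℝ) • (fderiv ℝ g p (1, 0) + I * fderiv ℝ g p (0, 1))

/-- `φ : ℍ → ℍ` is entire slice regular. -/
def EntireSliceRegular (φ : ℍ[ℝ] → ℍ[ℝ]) : Prop :=
  ∃ a : ℕ → ℍ[ℝ],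
    (∀ r : ℝ, 0 < r → Summable fun j => ‖a j‖ * r ^ j) ∧
    ∀ q : ℍ[ℝ], HasSum (fun j => q ^ j * a j) (φ q)

open scoped RightActions
open Finset

theorem summable_nat_mul_norm_mul_pow {F : Type*} [SeminormedAddCommGroup F] {a : ℕ → F}
    (ha : ∀ r, 0 < r → Summable fun j => ‖a j‖ * r ^ j) {r : ℝ} (hr : 0 < r) :
    Summable fun j : ℕ => (j : ℝ) * ‖a j‖ * r ^ j := by
  refine .of_nonneg_of_le (fun j => by positivity) (fun j => ?_) (ha (2 * r) (by positivity))
  have hj : (j : ℝ) ≤ 2 ^ j := mod_cast (Nat.lt_two_pow_self (n := j)).le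
  calc (j : ℝ) * ‖a j‖ * r ^ j ≤ 2 ^ j * ‖a j‖ * r ^ j := by gcongr
    _ = ‖a j‖ * (2 * r) ^ j := by ring

section NormedRing

variable {𝔸 : Type*} [NormedRing 𝔸] [NormOneClass 𝔸]

theorem norm_pow_mul_le {q : 𝔸} {ρ : ℝ} (hq : ‖q‖ ≤ ρ) (j : ℕ) (c : 𝔸) :
    ‖q ^ j * c‖ ≤ ‖c‖ * ρ ^ j :=
  calc ‖q ^ j * c‖ ≤ ‖q‖ ^ j * ‖c‖ := (norm_mul_le _ _).trans (by gcongr; exact norm_pow_le q j)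
    _ ≤ ‖c‖ * ρ ^ j := by rw [mul_comm]; gcongr

theorem norm_nat_smul_pow_pred_mul_le [NormedAlgebra ℝ 𝔸] {q : 𝔸} {ρ : ℝ} (hq : ‖q‖ ≤ ρ)
    (hρ : 1 ≤ ρ) (j : ℕ) (c : 𝔸) : ‖(j : ℝ) • (q ^ (j - 1) * c)‖ ≤ j * ‖c‖ * ρ ^ j := by
  rw [norm_smul, Real.norm_natCast, mul_assoc]
  gcongr
  exact (norm_pow_mul_le hq _ c).trans
    (mul_le_mul_of_nonneg_left (pow_le_pow_right₀ hρ (j.sub_le 1)) (norm_nonneg c))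

end NormedRing

section PowerSeries

variable {E 𝔸 : Type*} [NormedAddCommGroup E] [NormedSpace ℝ E] [NormedRing 𝔸]
  [NormedAlgebra ℝ 𝔸] {L : E →L[ℝ] 𝔸}

theorem hasFDerivAt_pow_of_commute (hL : ∀ u v, Commute (L u) (L v)) (n : ℕ) (p : E) :
    HasFDerivAt (fun p => L p ^ n) (L <• ((n : ℝ) • L p ^ (n - 1))) p := by
  induction n with
  | zero =>
    convert hasFDerivAt_const (𝕜 := ℝ) (1 : 𝔸) p using 1
    · simp
    · exact ContinuousLinearMap.ext fun v => by simp
  | succ n ih =>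
    simp_rw [pow_succ]
    refine (ih.mul' L.hasFDerivAt).congr_fderiv (ContinuousLinearMap.ext fun v => ?_)
    rcases n with _ | n
    · simp
    · simp only [add_apply, smul_apply, smul_eq_mul, op_smul_eq_mul, Nat.add_sub_cancel]
      rw [((hL p v).pow_left _).eq, mul_assoc, smul_mul_assoc, ← pow_succ, ← mul_add]
      congr 1
      push_cast
      module

theorem hasFDerivAt_pow_mul_of_commute (hL : ∀ u v, Commute (L u) (L v)) (j : ℕ) (c : 𝔸)
    (p : E) :
    HasFDerivAt (fun p => L p ^ j * c) (L <• ((j : ℝ) • (L p ^ (j - 1) * c))) p :=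
  ((hasFDerivAt_pow_of_commute hL j p).mul_const' c).congr_fderiv <|
    ContinuousLinearMap.ext fun v => by simp [mul_assoc]

theorem hasFDerivAt_tsum_pow_mul [NormOneClass 𝔸] [CompleteSpace 𝔸]
    (hL : ∀ u v, Commute (L u) (L v)) {a : ℕ → 𝔸}
    (ha : ∀ r, 0 < r → Summable fun j => ‖a j‖ * r ^ j) (p : E) :
    HasFDerivAt (fun p => ∑' j, L p ^ j * a j)
      (L <• ∑' j : ℕ, (j : ℝ) • (L p ^ (j - 1) * a j)) p := by
  let Φ : 𝔸 →L[ℝ] E →L[ℝ] 𝔸 :=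
    ((ContinuousLinearMap.mul ℝ 𝔸).bilinearComp L (.id ℝ 𝔸)).flip
  have hΦ (c : 𝔸) : Φ c = L <• c := rfl
  set ρ := ‖L‖ * (‖p‖ + 1) + 1
  have hρ : 1 ≤ ρ := by simp only [ρ, le_add_iff_nonneg_left]; positivity
  have hball : ∀ x ∈ Metric.ball (0 : E) (‖p‖ + 1), ‖L x‖ ≤ ρ := fun x hx => by
    rw [mem_ball_zero_iff] at hx
    exact (L.le_opNorm x).trans (by simp only [ρ]; nlinarith [norm_nonneg L])
  have hp : p ∈ Metric.ball (0 : E) (‖p‖ + 1) := by simp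
  have hderiv := hasFDerivAt_tsum_of_isPreconnected
    (u := fun j : ℕ => ‖Φ‖ * ((j : ℝ) * ‖a j‖ * ρ ^ j))
    ((summable_nat_mul_norm_mul_pow ha (by linarith)).mul_left _) Metric.isOpen_ball
    (convex_ball _ _).isPreconnected (fun j x _ => hasFDerivAt_pow_mul_of_commute hL j (a j) x)
    (fun j x hx => by
      rw [← hΦ]
      exact (Φ.le_opNorm _).trans
        (by gcongr; exact norm_nat_smul_pow_pred_mul_le (hball x hx) hρ j _))
    hp (.of_norm_bounded (ha ρ (by linarith)) fun j => norm_pow_mul_le (hball p hp) j (a j)) hp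
  have hsum : Summable fun j : ℕ => (j : ℝ) • (L p ^ (j - 1) * a j) :=
    .of_norm_bounded (summable_nat_mul_norm_mul_pow ha (by linarith))
      fun j => norm_nat_smul_pow_pred_mul_le (hball p hp) hρ j (a j)
  simp only [← hΦ] at hderiv ⊢
  rwa [Φ.map_tsum hsum]

end PowerSeries

namespace Quaternion

def slice (I : ℍ[ℝ]) : ℝ × ℝ →L[ℝ] ℍ[ℝ] :=
  (ContinuousLinearMap.fst ℝ ℝ ℝ).smulRight 1 + (ContinuousLinearMap.snd ℝ ℝ ℝ).smulRight I

variable {I : ℍ[ℝ]}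

@[simp] theorem slice_apply (I : ℍ[ℝ]) (p : ℝ × ℝ) : slice I p = p.1 • 1 + p.2 • I := rfl

@[simp] theorem slice_one_zero (I : ℍ[ℝ]) : slice I (1, 0) = 1 := by simp

@[simp] theorem slice_zero_one (I : ℍ[ℝ]) : slice I (0, 1) = I := by simp

theorem slice_apply_eq_coe_add_mul_coe (I : ℍ[ℝ]) (p : ℝ × ℝ) :
    slice I p = (p.1 : ℍ[ℝ]) + I * (p.2 : ℍ[ℝ]) := by
  rw [slice_apply, mul_coe_eq_smul, ← coe_mul_eq_smul, mul_one]

theorem _root_.Commute.slice {a : ℍ[ℝ]} (h : Commute a I) (p : ℝ × ℝ) : Commute a (slice I p) :=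
  ((Commute.one_right a).smul_right _).add_right (h.smul_right _)

theorem commute_slice (I : ℍ[ℝ]) (u v : ℝ × ℝ) : Commute (slice I u) (slice I v) :=
  ((Commute.refl I).slice u).symm.slice v

theorem re_eq_zero_of_mul_self_eq_neg_one (hI : I * I = -1) : I.re = 0 := by
  have h1 := congrArg QuaternionAlgebra.re hI
  have h2 := congrArg QuaternionAlgebra.imI hI
  have h3 := congrArg QuaternionAlgebra.imJ hI
  have h4 := congrArg QuaternionAlgebra.imK hI
  simp only [re_mul, imI_mul, imJ_mul, imK_mul, re_neg, imI_neg, imJ_neg, imK_neg, re_one,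
    imI_one, imJ_one, imK_one] at h1 h2 h3 h4
  nlinarith [sq_nonneg I.re, sq_nonneg I.imI, sq_nonneg I.imJ, sq_nonneg I.imK]

theorem star_slice (hI : I * I = -1) (p : ℝ × ℝ) : star (slice I p) = slice (-I) p := by
  rw [slice_apply, slice_apply, star_add, star_smul, star_smul, star_one,
    star_eq_neg.mpr (re_eq_zero_of_mul_self_eq_neg_one hI)]

end Quaternion

open Quaternion

section Dbar

variable {I : ℍ[ℝ]} {g u v : ℝ × ℝ → ℍ[ℝ]} {p : ℝ × ℝ}

theorem HasFDerivAt.dbar_eq {g' : ℝ × ℝ →L[ℝ] ℍ[ℝ]} (h : HasFDerivAt g g' p) :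
    dbar I g p = (1/2 : ℝ) • (g' (1, 0) + I * g' (0, 1)) := by
  rw [dbar, h.fderiv]

theorem dbar_sum {ι : Type*} {s : Finset ι} {F : ι → ℝ × ℝ → ℍ[ℝ]}
    (hF : ∀ i ∈ s, DifferentiableAt ℝ (F i) p) :
    dbar I (fun p => ∑ i ∈ s, F i p) p = ∑ i ∈ s, dbar I (F i) p := by
  simp only [dbar, fderiv_fun_sum hF, FunLike.coe_sum, Finset.sum_apply, mul_sum, ← sum_add_distrib,
    smul_sum]

theorem dbar_const_smul (r : ℝ) (hg : DifferentiableAt ℝ g p) :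
    dbar I (fun p => r • g p) p = r • dbar I g p := by
  rw [(hg.hasFDerivAt.fun_const_smul r).dbar_eq, hg.hasFDerivAt.dbar_eq]
  simp only [smul_apply, mul_smul_comm]
  module

theorem dbar_mul (hu : DifferentiableAt ℝ u p) (hv : DifferentiableAt ℝ v p)
    (hI : Commute I (u p)) :
    dbar I (fun p => u p * v p) p = dbar I u p * v p + u p * dbar I v p := by
  rw [(hu.hasFDerivAt.fun_mul' hv.hasFDerivAt).dbar_eq, hu.hasFDerivAt.dbar_eq,
    hv.hasFDerivAt.dbar_eq]
  simp only [add_apply, smul_apply, smul_eq_mul, op_smul_eq_mul]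
  rw [mul_add I, ← mul_assoc I (u p), hI.eq, mul_assoc]
  simp only [smul_mul_assoc, mul_smul_comm, add_mul, mul_add, mul_assoc]
  module

theorem dbar_slice_neg_pow (hI : I * I = -1) (j : ℕ) :
    dbar I (fun p => slice (-I) p ^ j) p = (j : ℝ) • slice (-I) p ^ (j - 1) := by
  rw [(hasFDerivAt_pow_of_commute (commute_slice (-I)) j p).dbar_eq]
  simp only [smul_apply, op_smul_eq_mul, slice_one_zero, slice_zero_one]
  rw [neg_mul, mul_neg, ← mul_assoc, hI, neg_one_mul, neg_neg, one_mul]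
  module

end Dbar

namespace EntireSliceRegular

variable {φ : ℍ[ℝ] → ℍ[ℝ]}

theorem hasFDerivAt_comp_slice (hφ : EntireSliceRegular φ) (I : ℍ[ℝ]) (p : ℝ × ℝ) :
    ∃ d : ℍ[ℝ], HasFDerivAt (fun p => φ (slice I p)) (slice I <• d) p := by
  obtain ⟨a, ha, hsum⟩ := hφ
  have hφ_eq : (fun p => φ (slice I p)) = fun p => ∑' j, slice I p ^ j * a j :=
    funext fun p => (hsum _).tsum_eq.symm
  exact ⟨_, hφ_eq ▸ hasFDerivAt_tsum_pow_mul (commute_slice I) ha p⟩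

theorem differentiableAt_comp_slice (hφ : EntireSliceRegular φ) (I : ℍ[ℝ]) (p : ℝ × ℝ) :
    DifferentiableAt ℝ (fun p => φ (slice I p)) p :=
  (hφ.hasFDerivAt_comp_slice I p).choose_spec.differentiableAt

/-- Cauchy–Riemann: the derivative `v ↦ slice I v * d` takes `(0, 1)` to `I` times its value
at `(1, 0)`. -/
theorem dbar_comp_slice (hφ : EntireSliceRegular φ) {I : ℍ[ℝ]} (hI : I * I = -1)
    (p : ℝ × ℝ) : dbar I (fun p => φ (slice I p)) p = 0 := by
  obtain ⟨d, h⟩ := hφ.hasFDerivAt_comp_slice I p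
  rw [h.dbar_eq]
  simp only [smul_apply, op_smul_eq_mul, slice_one_zero, slice_zero_one]
  rw [← mul_assoc, hI]
  simp

end EntireSliceRegular

theorem dbar_slice_neg_pow_mul {I : ℍ[ℝ]} (hI : I * I = -1) {φ : ℍ[ℝ] → ℍ[ℝ]}
    (hφ : EntireSliceRegular φ) (j : ℕ) (p : ℝ × ℝ) :
    dbar I (fun p => slice (-I) p ^ j * φ (slice I p)) p =
      (j : ℝ) • (slice (-I) p ^ (j - 1) * φ (slice I p)) := by
  rw [dbar_mul ((slice (-I)).differentiableAt.fun_pow j) (hφ.differentiableAt_comp_slice I p)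
    ((((Commute.refl I).neg_right).slice p).pow_right j), dbar_slice_neg_pow hI,
    hφ.dbar_comp_slice hI, mul_zero, add_zero, smul_mul_assoc]

theorem iterate_dbar_sum_slice_neg_pow_mul {I : ℍ[ℝ]} (hI : I * I = -1) {s : Finset ℕ}
    {φ : ℕ → ℍ[ℝ] → ℍ[ℝ]} (hφ : ∀ k ∈ s, EntireSliceRegular (φ k)) (m : ℕ) :
    (dbar I)^[m] (fun p => ∑ k ∈ s, slice (-I) p ^ k * φ k (slice I p)) =
      fun p => ∑ k ∈ s, (k.descFactorial m : ℝ) • (slice (-I) p ^ (k - m) * φ k (slice I p)) := by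
  induction m with
  | zero => simp
  | succ m ih =>
    funext p
    have hdiff : ∀ k ∈ s,
        DifferentiableAt ℝ (fun p => slice (-I) p ^ (k - m) * φ k (slice I p)) p :=
      fun k hk => ((slice (-I)).differentiableAt.fun_pow _).fun_mul
        ((hφ k hk).differentiableAt_comp_slice I p)
    rw [Function.iterate_succ_apply', ih, dbar_sum fun k hk => (hdiff k hk).fun_const_smul _]
    refine sum_congr rfl fun k hk => ?_
    rw [dbar_const_smul _ (hdiff k hk), dbar_slice_neg_pow_mul hI (hφ k hk), smul_smul,
      Nat.descFactorial_succ, Nat.cast_mul, mul_comm, Nat.sub_sub]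

theorem Nat.descFactorial_add_eq_choose_mul_choose (m j k : ℕ) :
    m.descFactorial (j + k) = m.choose j * (m - j).choose k * (j.factorial * k.factorial) := by
  have hfac := Nat.choose_mul_factorial_mul_factorial (le_add_right j k)
  rw [Nat.add_sub_cancel_left] at hfac
  rw [Nat.descFactorial_eq_factorial_mul_choose, ← hfac, mul_comm, ← mul_assoc, ← mul_assoc,
    Nat.choose_mul (le_add_right j k), Nat.add_sub_cancel_left, mul_assoc _ (j.factorial)]

theorem sum_range_neg_one_pow_mul_choose_of_le {M N : ℕ} (h : M ≤ N) :
    ∑ k ∈ range (N + 1), (-1 : ℝ) ^ k * M.choose k = if M = 0 then 1 else 0 := by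
  rw [← sum_subset (range_subset_range.2 (by omega : M + 1 ≤ N + 1)) fun k _ hk => by
    rw [Nat.choose_eq_zero_of_lt (by simpa using hk), Nat.cast_zero, mul_zero]]
  exact_mod_cast Int.alternating_sum_range_choose

theorem sum_Icc_sum_range_neg_one_pow_div_mul_descFactorial {m n : ℕ} (hm : m ≤ n) :
    ∑ j ∈ Icc 1 n, ∑ k ∈ range (n - j + 1),
      (-1 : ℝ) ^ k / (j.factorial * k.factorial) * m.descFactorial (j + k) =
        if m = 0 then 0 else 1 := by
  have hinner : ∀ j ∈ Icc 1 n, ∑ k ∈ range (n - j + 1),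
      (-1 : ℝ) ^ k / (j.factorial * k.factorial) * m.descFactorial (j + k) =
        if j = m then 1 else 0 := by
    intro j hj
    have hcoeff : ∀ k, (-1 : ℝ) ^ k / (j.factorial * k.factorial) * m.descFactorial (j + k) =
        m.choose j * ((-1) ^ k * (m - j).choose k) := fun k => by
      rw [Nat.descFactorial_add_eq_choose_mul_choose]
      push_cast
      field_simp
    simp_rw [hcoeff, ← mul_sum]
    rcases le_or_gt j m with hjm | hjm
    · rw [sum_range_neg_one_pow_mul_choose_of_le (by omega : m - j ≤ n - j)]
      by_cases hj : j = m
      · simp [hj]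
      · simp [hj, show m - j ≠ 0 by omega]
    · simp [Nat.choose_eq_zero_of_lt hjm, hjm.ne']
  rw [sum_congr rfl hinner, sum_ite_eq' (Icc 1 n) m]
  by_cases h0 : m = 0 <;> simp [h0, hm, Nat.one_le_iff_ne_zero]

theorem sum_pow_mul_eq_add_sum_sum {A : Type*} [Ring A] [Algebra ℝ A] (n : ℕ) (c : A)
    (Φ : ℕ → A) :
    ∑ m ∈ range (n + 1), c ^ m * Φ m =
      Φ 0 + ∑ j ∈ Icc 1 n, ∑ k ∈ range (n - j + 1),
        ((-1 : ℝ) ^ k / (j.factorial * k.factorial)) • (c ^ (j + k) * ∑ m ∈ range (n + 1),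
          (m.descFactorial (j + k) : ℝ) • (c ^ (m - (j + k)) * Φ m)) := by
  have hpow (l m : ℕ) : (m.descFactorial l : ℝ) • (c ^ l * (c ^ (m - l) * Φ m)) =
      (m.descFactorial l : ℝ) • (c ^ m * Φ m) := by
    rcases le_or_gt l m with h | h
    · rw [← mul_assoc, ← pow_add, Nat.add_sub_cancel' h]
    · rw [Nat.descFactorial_eq_zero_iff_lt.mpr h, Nat.cast_zero, zero_smul, zero_smul]
  symm
  simp_rw [mul_sum, mul_smul_comm, hpow, smul_sum, smul_smul]
  rw [sum_congr rfl fun j _ => sum_comm, sum_comm]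
  simp_rw [← sum_smul]
  rw [sum_congr rfl fun m hm => by
    rw [sum_Icc_sum_range_neg_one_pow_div_mul_descFactorial (mem_range_succ_iff.mp hm)]]
  simp [sum_range_succ', add_comm]

/-- for `f` S-polyregular of level `n` in decomposed form,
`f(q) = φ_0(q) + ∑_{j=1}^{n} ∑_{k=0}^{n−j} (−1)^k (q̄^{j+k}/(j!k!)) ((∂̄_I)^{j+k} g_I)(x,y)`. -/
theorem stmt1 (n : ℕ) (f : ℍ[ℝ] → ℍ[ℝ]) (φ : ℕ → ℍ[ℝ] → ℍ[ℝ])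
    (hreg : ∀ k, k ≤ n → EntireSliceRegular (φ k))
    (hf : ∀ q : ℍ[ℝ], f q = ∑ k ∈ Finset.range (n + 1), (star q) ^ k * φ k q) :
    ∀ I : ℍ[ℝ], I * I = -1 → ∀ x y : ℝ,
      f ((x : ℍ[ℝ]) + I * (y : ℍ[ℝ])) =
        φ 0 ((x : ℍ[ℝ]) + I * (y : ℍ[ℝ])) +
          ∑ j ∈ Finset.Icc 1 n, ∑ k ∈ Finset.range (n - j + 1),
            ((-1 : ℝ) ^ k / ((j.factorial : ℝ) * (k.factorial : ℝ))) •
              ((star ((x : ℍ[ℝ]) + I * (y : ℍ[ℝ]))) ^ (j + k) *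
                (dbar I)^[j + k]
                  (fun p : ℝ × ℝ => f ((p.1 : ℍ[ℝ]) + I * (p.2 : ℍ[ℝ]))) (x, y)) := by
  intro I hI x y
  have hg : (fun p : ℝ × ℝ => f ((p.1 : ℍ[ℝ]) + I * (p.2 : ℍ[ℝ]))) =
      fun p => ∑ k ∈ range (n + 1), slice (-I) p ^ k * φ k (slice I p) := by
    funext p
    rw [← slice_apply_eq_coe_add_mul_coe, hf, star_slice hI]
  have hq : (x : ℍ[ℝ]) + I * (y : ℍ[ℝ]) = slice I (x, y) :=
    (slice_apply_eq_coe_add_mul_coe I (x, y)).symm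
  have hreg' : ∀ k ∈ range (n + 1), EntireSliceRegular (φ k) :=
    fun k hk => hreg k (mem_range_succ_iff.mp hk)
  rw [hg]
  simp only [iterate_dbar_sum_slice_neg_pow_mul hI hreg']
  rw [hf, hq, star_slice hI]
  exact sum_pow_mul_eq_add_sum_sum n (slice (-I) (x, y)) fun m => φ m (slice I (x, y))
end
end

section
/- Identity Principle for S-polyregular functions: let n ∈ ℕ and let f : ℍ → ℍ be S-polyregular of level n in decomposed form, f(q) = ∑_{k=0}^{n} q̄^k·φ_k(q) with each φ_k entire slice regular. Suppose there exist I ∈ 𝕊 and a nonempty open set U ⊆ ℝ² such that f(x+Iy) = 0 for all (x,y) ∈ U. Then f is identically zero on ℍ, and moreover each φ_k is identically zero on ℍ. -/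
/-!
`f` is real-analytic on `ℍ`, so on the slice `σ : x + iy ↦ x + Iy` it vanishes identically by
the identity principle. On a real ray, `f (t • q) = ∑ₘ tᵐ cₘ(q)` with
`cₘ(q) = ∑_{k ≤ m} q̄ᵏ q^(m-k) a k (m-k)`, where `a k` are the coefficients of `φ k`; hence
every `cₘ(σ w)` vanishes. For `w ≠ 0` this says `σ(w)ᵐ ∑ₖ σ(w̄/w)ᵏ a k (m-k) = 0`. Since `w̄/w`
takes infinitely many values and `ℍ` is a `ℂ`-vector space through `σ`, a polynomial with
infinitely many roots shows `a k (m-k) = 0`.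
-/

open scoped Quaternion

noncomputable section

open Finset

section PowerSeriesInAlgebra

variable (𝕜 : Type*) {A : Type*} [NontriviallyNormedField 𝕜] [NormedRing A]
  [NormedAlgebra 𝕜 A]

def powMulSeries (a : ℕ → A) : FormalMultilinearSeries 𝕜 A A := fun j =>
  ((ContinuousLinearMap.mul 𝕜 A).flip (a j)).compContinuousMultilinearMap
    (ContinuousMultilinearMap.mkPiAlgebraFin 𝕜 j A)

variable {𝕜}

@[simp]
theorem powMulSeries_apply_diag (a : ℕ → A) (j : ℕ) (q : A) :
    powMulSeries 𝕜 a j (fun _ => q) = q ^ j * a j := by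
  simp [powMulSeries, ContinuousMultilinearMap.mkPiAlgebraFin_apply, List.ofFn_const,
    List.prod_replicate]

theorem norm_powMulSeries_le [NormOneClass A] (a : ℕ → A) (j : ℕ) :
    ‖powMulSeries 𝕜 a j‖ ≤ ‖a j‖ := by
  have hmul : ‖(ContinuousLinearMap.mul 𝕜 A).flip (a j)‖ ≤ ‖a j‖ :=
    ContinuousLinearMap.opNorm_le_bound _ (norm_nonneg _) fun x => by
      simpa [mul_comm ‖a j‖] using norm_mul_le x (a j)
  calc ‖powMulSeries 𝕜 a j‖
      ≤ ‖(ContinuousLinearMap.mul 𝕜 A).flip (a j)‖ *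
          ‖ContinuousMultilinearMap.mkPiAlgebraFin 𝕜 j A‖ :=
        ContinuousLinearMap.norm_compContinuousMultilinearMap_le _ _
    _ ≤ ‖a j‖ := by simpa using hmul

theorem hasFPowerSeriesOnBall_powMulSeries [NormOneClass A] {a : ℕ → A} {g : A → A}
    (ha : ∀ r : ℝ, 0 < r → Summable fun j => ‖a j‖ * r ^ j)
    (hg : ∀ q, HasSum (fun j => q ^ j * a j) (g q)) :
    HasFPowerSeriesOnBall g (powMulSeries 𝕜 a) 0 ⊤ where
  r_le := by
    refine le_of_eq (FormalMultilinearSeries.radius_eq_top_of_summable_norm _ fun r => ?_).symm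
    refine (ha (r + 1) (by positivity)).of_nonneg_of_le (fun j => by positivity) fun j => ?_
    gcongr
    · exact norm_powMulSeries_le a j
    · exact le_add_of_nonneg_right zero_le_one
  r_pos := ENNReal.zero_lt_top
  hasSum {q} _ := by simpa using hg q

end PowerSeriesInAlgebra

theorem EntireSliceRegular.analyticOnNhd {φ : ℍ[ℝ] → ℍ[ℝ]} (hφ : EntireSliceRegular φ) :
    AnalyticOnNhd ℝ φ Set.univ := by
  obtain ⟨a, ha, hsum⟩ := hφ
  simpa using (hasFPowerSeriesOnBall_powMulSeries (𝕜 := ℝ) ha hsum).analyticOnNhd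

theorem eq_zero_of_hasSum_pow_smul {𝕜 E : Type*} [NontriviallyNormedField 𝕜]
    [NormedAddCommGroup E] [NormedSpace 𝕜 E] {c : ℕ → E}
    (h : ∀ᶠ t in nhds (0 : 𝕜), HasSum (fun m => t ^ m • c m) 0) : c = 0 := by
  let p : FormalMultilinearSeries 𝕜 𝕜 E := fun m =>
    ContinuousMultilinearMap.mkPiRing 𝕜 (Fin m) (c m)
  have hcoeff : ∀ m, p.coeff m = c m := fun m => by simp [p, FormalMultilinearSeries.coeff]
  have hp : HasFPowerSeriesAt 0 p 0 := by
    rw [hasFPowerSeriesAt_iff]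
    simpa [hcoeff] using h
  funext m
  rw [← hcoeff m, hp.eq_zero]
  rfl

theorem HasSum.pow_smul_shift {R E : Type*} [Monoid R] [AddCommGroup E]
    [DistribMulAction R E] [TopologicalSpace E] [IsTopologicalAddGroup E] [ContinuousConstSMul R E]
    {b : ℕ → E} {s : E} {t : R} (h : HasSum (fun j => t ^ j • b j) s) (k : ℕ) :
    HasSum (fun m => t ^ m • if k ≤ m then b (m - k) else 0) (t ^ k • s) := by
  rw [← hasSum_nat_add_iff' k]
  have hhead : ∑ i ∈ range k, t ^ i • (if k ≤ i then b (i - k) else 0) = 0 :=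
    sum_eq_zero fun i hi => by rw [if_neg (not_le.mpr (mem_range.mp hi)), smul_zero]
  rw [hhead, sub_zero]
  refine (h.const_smul (t ^ k)).congr_fun fun j => ?_
  rw [if_pos (Nat.le_add_left k j), Nat.add_sub_cancel, ← mul_smul, ← pow_add, add_comm]

theorem eq_zero_of_sum_map_pow_mul_eq_zero {K R : Type*} [Field K] [Ring R] (σ : K →+* R)
    {N : ℕ} {b : ℕ → R} {S : Set K} (hS : S.Infinite)
    (h : ∀ v ∈ S, ∑ k ∈ range N, σ v ^ k * b k = 0) : ∀ k < N, b k = 0 := by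
  let _ : Module K R := Module.compHom R σ
  intro k hk
  refine (Module.forall_dual_apply_eq_zero_iff K (b k)).mp fun ℓ => ?_
  let P : Polynomial K := ∑ i ∈ range N, Polynomial.C (ℓ (b i)) * Polynomial.X ^ i
  have hP : P = 0 := by
    refine Polynomial.eq_zero_of_infinite_isRoot P (hS.mono fun v hv => ?_)
    have hℓ : ∀ i, ℓ (σ v ^ i * b i) = v ^ i * ℓ (b i) := fun i => by
      rw [← map_pow]
      exact ℓ.map_smul (v ^ i) (b i)
    have hv' := congrArg ℓ (h v hv)
    simp only [map_sum, map_zero, hℓ] at hv'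
    simp only [P, Polynomial.IsRoot, Polynomial.eval_finsetSum, Polynomial.eval_mul,
      Polynomial.eval_C, Polynomial.eval_pow, Polynomial.eval_X]
    rw [← hv']
    exact sum_congr rfl fun i _ => mul_comm _ _
  simpa [P, Polynomial.finsetSum_coeff, hk] using congrArg (Polynomial.coeff · k) hP

theorem Complex.conj_div_self_one_add_mul_I_injective :
    Function.Injective fun t : ℝ => starRingEnd ℂ (1 + t * I) / (1 + t * I) := by
  have hne : ∀ x : ℝ, (1 + x * I : ℂ) ≠ 0 := fun x h => by simpa using congrArg re h
  intro s t h
  rw [div_eq_div_iff (hne s) (hne t)] at h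
  have him := congrArg im h
  simp at him
  linarith

section Slice

variable {I : ℍ[ℝ]} (hI : I * I = -1)
include hI

theorem Quaternion.star_eq_neg_of_mul_self_eq_neg_one : star I = -I := by
  have hnormSq : normSq I = 1 := by
    have h := congrArg normSq hI
    rw [map_mul, normSq_neg, map_one] at h
    nlinarith [normSq_nonneg (a := I)]
  rw [star_eq_neg, ← sq_eq_neg_normSq, sq, hI, hnormSq]
  simp

theorem star_liftAux (z : ℂ) :
    star (Complex.liftAux I hI z) = Complex.liftAux I hI (starRingEnd ℂ z) := by
  simp [Complex.liftAux_apply, Quaternion.star_eq_neg_of_mul_self_eq_neg_one hI]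

theorem liftAux_eq_re_add_mul_im (z : ℂ) :
    Complex.liftAux I hI z = (z.re : ℍ[ℝ]) + I * (z.im : ℍ[ℝ]) := by
  rw [Complex.liftAux_apply, Quaternion.algebraMap_def, Quaternion.mul_coe_eq_smul]

theorem eq_zero_on_slice_of_eq_zero_on_open {E : Type*} [NormedAddCommGroup E]
    [NormedSpace ℝ E] {g : ℍ[ℝ] → E} (hg : AnalyticOnNhd ℝ g Set.univ)
    {U : Set (ℝ × ℝ)} (hU : IsOpen U) (hUne : U.Nonempty)
    (hvan : ∀ p ∈ U, g ((p.1 : ℍ[ℝ]) + I * (p.2 : ℍ[ℝ])) = 0) (z : ℂ) :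
    g (Complex.liftAux I hI z) = 0 := by
  let σ : ℂ →L[ℝ] ℍ[ℝ] := (Complex.liftAux I hI).toLinearMap.toContinuousLinearMap
  have han : AnalyticOnNhd ℝ (g ∘ σ) Set.univ :=
    hg.comp (σ.analyticOnNhd _) (Set.mapsTo_univ _ _)
  obtain ⟨p, hp⟩ := hUne
  let e := Complex.equivRealProdCLM
  have hev : g ∘ σ =ᶠ[nhds (e.symm p)] 0 := by
    filter_upwards [(hU.preimage e.continuous).mem_nhds (by simpa using hp)] with w hw
    have hw' := hvan _ hw
    simp only [e, Complex.equivRealProdCLM_apply] at hw'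
    show g (Complex.liftAux I hI w) = 0
    rwa [liftAux_eq_re_add_mul_im]
  exact han.eqOn_zero_of_preconnected_of_eventuallyEq_zero isPreconnected_univ
    (Set.mem_univ _) hev (Set.mem_univ z)

end Slice

def polyregularSum (n : ℕ) (φ : ℕ → ℍ[ℝ] → ℍ[ℝ]) (q : ℍ[ℝ]) : ℍ[ℝ] :=
  ∑ k ∈ range (n + 1), star q ^ k * φ k q

theorem analyticOnNhd_polyregularSum {n : ℕ} {φ : ℕ → ℍ[ℝ] → ℍ[ℝ]}
    (hreg : ∀ k ≤ n, EntireSliceRegular (φ k)) :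
    AnalyticOnNhd ℝ (polyregularSum n φ) Set.univ := by
  let starₗ : ℍ[ℝ] →ₗ[ℝ] ℍ[ℝ] :=
    { toFun := star, map_add' := star_add, map_smul' := Quaternion.star_smul }
  have hstar : AnalyticOnNhd ℝ (star : ℍ[ℝ] → ℍ[ℝ]) Set.univ :=
    starₗ.toContinuousLinearMap.analyticOnNhd _
  refine Finset.analyticOnNhd_fun_sum _ fun k hk => (hstar.pow k).mul ?_
  exact (hreg k (Nat.lt_succ_iff.mp (mem_range.mp hk))).analyticOnNhd

def rayCoeff (n : ℕ) (a : ℕ → ℕ → ℍ[ℝ]) (q : ℍ[ℝ]) (m : ℕ) : ℍ[ℝ] :=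
  ∑ k ∈ range (n + 1), if k ≤ m then star q ^ k * q ^ (m - k) * a k (m - k) else 0

section Ray

variable {n : ℕ} {φ : ℕ → ℍ[ℝ] → ℍ[ℝ]} {a : ℕ → ℕ → ℍ[ℝ]}

theorem hasSum_rayCoeff (ha : ∀ k ≤ n, ∀ q, HasSum (fun j => q ^ j * a k j) (φ k q))
    (q : ℍ[ℝ]) (t : ℝ) :
    HasSum (fun m => t ^ m • rayCoeff n a q m) (polyregularSum n φ (t • q)) := by
  simp only [rayCoeff, polyregularSum, smul_sum]
  refine hasSum_sum fun k hk => ?_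
  have hφ := (ha k (Nat.lt_succ_iff.mp (mem_range.mp hk)) (t • q)).mul_left (star q ^ k)
  simp only [smul_pow, smul_mul_assoc, mul_smul_comm, ← mul_assoc] at hφ
  rw [Quaternion.star_smul, smul_pow, smul_mul_assoc]
  exact hφ.pow_smul_shift k

theorem rayCoeff_eq_zero (ha : ∀ k ≤ n, ∀ q, HasSum (fun j => q ^ j * a k j) (φ k q))
    {q : ℍ[ℝ]} (hq : ∀ t : ℝ, polyregularSum n φ (t • q) = 0) (m : ℕ) :
    rayCoeff n a q m = 0 :=
  congrFun (eq_zero_of_hasSum_pow_smul (Filter.Eventually.of_forall fun t =>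
    hq t ▸ hasSum_rayCoeff ha q t)) m

theorem rayCoeff_liftAux {I : ℍ[ℝ]} (hI : I * I = -1) {w : ℂ} (hw : w ≠ 0) (m : ℕ) :
    rayCoeff n a (Complex.liftAux I hI w) m = Complex.liftAux I hI w ^ m *
      ∑ k ∈ range (n + 1), Complex.liftAux I hI (starRingEnd ℂ w / w) ^ k *
        (if k ≤ m then a k (m - k) else 0) := by
  set σ := Complex.liftAux I hI
  rw [rayCoeff, mul_sum]
  refine sum_congr rfl fun k _ => ?_
  split_ifs with hkm
  · have hpow : starRingEnd ℂ w ^ k * w ^ (m - k) = w ^ m * (starRingEnd ℂ w / w) ^ k := by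
      rw [div_pow, ← pow_sub_mul_pow w hkm]
      field_simp
    rw [← mul_assoc, star_liftAux]
    congr 1
    rw [← map_pow σ, ← map_pow σ, ← map_pow σ, ← map_pow σ, ← map_mul, ← map_mul, hpow]
  · simp

theorem coeff_eq_zero_of_polyregularSum_liftAux_eq_zero
    (ha : ∀ k ≤ n, ∀ q, HasSum (fun j => q ^ j * a k j) (φ k q))
    {I : ℍ[ℝ]} (hI : I * I = -1)
    (hslice : ∀ z, polyregularSum n φ (Complex.liftAux I hI z) = 0)
    {k : ℕ} (hk : k ≤ n) (j : ℕ) : a k j = 0 := by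
  set σ := Complex.liftAux I hI
  let w : ℝ → ℂ := fun t => 1 + t * Complex.I
  have hw : ∀ t, w t ≠ 0 := fun t h => by simpa [w] using congrArg Complex.re h
  have hsum : ∀ t, ∑ i ∈ range (n + 1), σ (starRingEnd ℂ (w t) / w t) ^ i *
      (if i ≤ k + j then a i (k + j - i) else 0) = 0 := by
    intro t
    have hray := rayCoeff_eq_zero ha (q := σ (w t))
      (fun s => by rw [← map_smul]; exact hslice _) (k + j)
    rw [rayCoeff_liftAux hI (hw t)] at hray
    exact (mul_eq_zero.mp hray).resolve_left (pow_ne_zero _ ((map_ne_zero σ).mpr (hw t)))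
  simpa using eq_zero_of_sum_map_pow_mul_eq_zero σ.toRingHom
    (Set.infinite_range_of_injective Complex.conj_div_self_one_add_mul_I_injective)
    (Set.forall_mem_range.mpr hsum) k (Nat.lt_succ_of_le hk)

end Ray

/-- Identity Principle for S-polyregular functions: if `f` vanishes on a
nonempty open subset of a slice, then `f ≡ 0` on `ℍ` and each component `φ_k ≡ 0`. -/
theorem stmt6 (n : ℕ) (f : ℍ[ℝ] → ℍ[ℝ]) (φ : ℕ → ℍ[ℝ] → ℍ[ℝ])
    (hreg : ∀ k, k ≤ n → EntireSliceRegular (φ k))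
    (hf : ∀ q : ℍ[ℝ], f q = ∑ k ∈ Finset.range (n + 1), (star q) ^ k * φ k q)
    (I : ℍ[ℝ]) (hI : I * I = -1) (U : Set (ℝ × ℝ)) (hU : IsOpen U) (hUne : U.Nonempty)
    (hvan : ∀ p : ℝ × ℝ, p ∈ U → f ((p.1 : ℍ[ℝ]) + I * (p.2 : ℍ[ℝ])) = 0) :
    (∀ q : ℍ[ℝ], f q = 0) ∧ ∀ k, k ≤ n → ∀ q : ℍ[ℝ], φ k q = 0 := by
  obtain rfl : f = polyregularSum n φ := funext hf
  have hslice := eq_zero_on_slice_of_eq_zero_on_open hI (analyticOnNhd_polyregularSum hreg)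
    hU hUne hvan
  choose! a _ ha using hreg
  have hφ : ∀ k ≤ n, ∀ q, φ k q = 0 := fun k hk q =>
    (ha k hk q).unique
      (by simp [coeff_eq_zero_of_polyregularSum_liftAux_eq_zero ha hI hslice hk])
  refine ⟨fun q => sum_eq_zero fun k hk => ?_, hφ⟩
  rw [hφ k (Nat.lt_succ_iff.mp (mem_range.mp hk)) q, mul_zero]
end
end

section
/- Commutativity of the star product under commuting coefficients: let m, n ∈ ℕ and let a_{l,j} (l ∈ ℕ, 0 ≤ j ≤ m) and b_{l,k} (l ∈ ℕ, 0 ≤ k ≤ n) be quaternions with ∑_l |a_{l,j}|·r^l < ∞ and ∑_l |b_{l,k}|·r^l < ∞ for every r > 0, defining f(q) = ∑_{j=0}^{m} q̄^j·∑_l q^l·a_{l,j} and g(q) = ∑_{k=0}^{n} q̄^k·∑_l q^l·b_{l,k}. If a_{l,j}·b_{r,k} = b_{r,k}·a_{l,j} for all indices l, j, r, k, then (f ⋆^L_{sp} g)(q) = (g ⋆^L_{sp} f)(q) for every q ∈ ℍ. -/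
open scoped Quaternion

noncomputable section

/-- The left star product of the S-polyregular functions
`f(q) = ∑_{j=0}^m q̄^j ∑_l q^l a_{l,j}` and `g(q) = ∑_{k=0}^n q̄^k ∑_l q^l b_{l,k}`:
`(f ⋆^L_{sp} g)(q) = ∑_{j=0}^m ∑_{k=0}^n q̄^{j+k} ∑_s q^s (∑_{l=0}^s a_{l,j} b_{s−l,k})`. -/
def starProd (m n : ℕ) (a b : ℕ → ℕ → ℍ[ℝ]) (q : ℍ[ℝ]) : ℍ[ℝ] :=
  ∑ j ∈ Finset.range (m + 1), ∑ k ∈ Finset.range (n + 1),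
    (star q) ^ (j + k) *
      ∑' s : ℕ, q ^ s * ∑ l ∈ Finset.range (s + 1), a l j * b (s - l) k

theorem Finset.sum_range_succ_mul_sub_comm {R : Type*} [NonUnitalNonAssocSemiring R]
    (f g : ℕ → R) (hfg : ∀ i j, f i * g j = g j * f i) (s : ℕ) :
    ∑ l ∈ range (s + 1), f l * g (s - l) = ∑ l ∈ range (s + 1), g l * f (s - l) := by
  rw [← Nat.sum_antidiagonal_eq_sum_range_succ (fun i j => f i * g j),
    ← Nat.sum_antidiagonal_eq_sum_range_succ (fun i j => g i * f j),
    ← Nat.sum_antidiagonal_swap]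
  exact sum_congr rfl fun p _ => hfg p.2 p.1

theorem stmt7_general (m n : ℕ) (a b : ℕ → ℕ → ℍ[ℝ])
    (hcomm : ∀ l j r k : ℕ, a l j * b r k = b r k * a l j) :
    ∀ q : ℍ[ℝ], starProd m n a b q = starProd n m b a q := by
  intro q
  unfold starProd
  rw [Finset.sum_comm]
  refine Finset.sum_congr rfl fun k _ => Finset.sum_congr rfl fun j _ => ?_
  simp only [Nat.add_comm k j,
    Finset.sum_range_succ_mul_sub_comm (a · j) (b · k) fun l r => hcomm l j r k]

/-- if all the coefficients of `f` and `g` commute pairwise, then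
`f ⋆^L_{sp} g = g ⋆^L_{sp} f`. -/
theorem stmt7 (m n : ℕ) (a b : ℕ → ℕ → ℍ[ℝ])
    (ha : ∀ j, j ≤ m → ∀ r : ℝ, 0 < r → Summable fun l : ℕ => ‖a l j‖ * r ^ l)
    (hb : ∀ k, k ≤ n → ∀ r : ℝ, 0 < r → Summable fun l : ℕ => ‖b l k‖ * r ^ l)
    (hcomm : ∀ l j r k : ℕ, a l j * b r k = b r k * a l j) :
    ∀ q : ℍ[ℝ], starProd m n a b q = starProd n m b a q :=
  stmt7_general m n a b hcomm
end
end

section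
/- Fix q ∈ ℍ and let S_1 : ℍ → ℍ be the S-polyregular function of level 1 given by S_1(p) = p̄·(p−q) − (p−q)·q̄, i.e. in decomposed form S_1(p) = p̄·(p·1 + (−q)) + (p·(−q̄) + q·q̄), and for k ≥ 1 let S_k := S_1 ⋆^L_{sp} S_1 ⋆^L_{sp} ⋯ ⋆^L_{sp} S_1 (k factors, iterated left star product in the variable p). Then for every k ≥ 1 and every p ∈ ℍ: S_k(p) = ∑_{j=0}^{k} (−1)^j·binomial(k,j)·p̄^{k−j}·(∑_{i=0}^{k} binomial(k,i)·p^i·(−q)^{k−i})·q̄^j. -/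
open scoped Quaternion

noncomputable section

/-- Coefficient array of the left star product of two S-polyregular functions given by
their coefficient arrays: if `f(p) = ∑_t p̄^t ∑_s p^s a_{s,t}`, the product array is
`c_{s,t} = ∑_{j+k=t} ∑_{l=0}^s a_{l,j} b_{s−l,k}`. -/
def coeffMul (a b : ℕ → ℕ → ℍ[ℝ]) : ℕ → ℕ → ℍ[ℝ] :=
  fun s t => ∑ j ∈ Finset.range (t + 1), ∑ l ∈ Finset.range (s + 1),
    a l j * b (s - l) (t - j)

/-- Evaluation of the S-polyregular function of level `n` with coefficient array `a`:
`p ↦ ∑_{t=0}^n p̄^t ∑_s p^s a_{s,t}`. -/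
def evalArr (n : ℕ) (a : ℕ → ℕ → ℍ[ℝ]) (p : ℍ[ℝ]) : ℍ[ℝ] :=
  ∑ t ∈ Finset.range (n + 1), (star p) ^ t * ∑' s : ℕ, p ^ s * a s t

/-- Coefficient array of `S_1(p) = p̄·(p−q) − (p−q)·q̄`: for `p̄^1` the coefficients
`a_{0,1} = −q`, `a_{1,1} = 1`; for `p̄^0` the coefficients `a_{0,0} = q·q̄`, `a_{1,0} = −q̄`. -/
def S1arr (q : ℍ[ℝ]) : ℕ → ℕ → ℍ[ℝ] := fun s t =>
  if s = 0 ∧ t = 1 then -q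
  else if s = 1 ∧ t = 1 then 1
  else if s = 0 ∧ t = 0 then q * star q
  else if s = 1 ∧ t = 0 then -star q
  else 0

/-!
Read `p` and `p̄` as two commuting formal variables: a coefficient array `a` is then the
polynomial `∑ Y^t X^s a_{s,t}` in `ℍ[X][Y]`, and `coeffMul` is the product of such polynomials.
Since `S_1` corresponds to `(X - q)(Y - q̄)` and `q` commutes with `q̄`, the array of `S_k` is that
of `(X - q)^k (Y - q̄)^k`, whose coefficients are read off from the binomial theorem. The array
factors as a function of `s` times a function of `t`, and evaluating it gives the formula.
-/

section PolynomialModel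

open Polynomial

def bicoeff (F : Polynomial (Polynomial ℍ[ℝ])) : ℕ → ℕ → ℍ[ℝ] :=
  fun s t => (F.coeff t).coeff s

theorem coeffMul_bicoeff (F G : Polynomial (Polynomial ℍ[ℝ])) :
    coeffMul (bicoeff F) (bicoeff G) = bicoeff (F * G) := by
  funext s t
  simp only [coeffMul, bicoeff, coeff_mul, finsetSum_coeff,
    Finset.Nat.sum_antidiagonal_eq_sum_range_succ_mk]

def S1poly (q : ℍ[ℝ]) : Polynomial (Polynomial ℍ[ℝ]) :=
  C (X - C q) * (X - C (C (star q)))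

theorem S1arr_eq_bicoeff (q : ℍ[ℝ]) : S1arr q = bicoeff (S1poly q) := by
  funext s t
  rcases s with _ | _ | s <;> rcases t with _ | _ | t <;>
    simp [S1arr, bicoeff, S1poly, mul_sub, coeff_X, coeff_C]

theorem iterate_coeffMul_S1arr (q : ℍ[ℝ]) (n : ℕ) :
    (fun c => coeffMul c (S1arr q))^[n] (S1arr q) = bicoeff (S1poly q ^ (n + 1)) := by
  induction n with
  | zero => rw [Function.iterate_zero_apply, pow_one, S1arr_eq_bicoeff]
  | succ n ih =>
    rw [Function.iterate_succ_apply', ih, S1arr_eq_bicoeff, coeffMul_bicoeff, ← pow_succ]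

theorem coeff_coeff_pow_C_X_add_C_mul_X_add_C {R : Type*} [Semiring R] {a b : R}
    (hab : Commute a b) (k s t : ℕ) :
    (((C (X + C a) * (X + C (C b))) ^ k).coeff t).coeff s =
      a ^ (k - s) * k.choose s * (b ^ (k - t) * k.choose t) := by
  have hcomm : Commute (C (X + C a)) (X + C (C b)) :=
    (commute_X _).symm.add_right (((commute_X (C b)).add_left (hab.map C)).map C)
  rw [hcomm.mul_pow, ← C_pow, coeff_C_mul, coeff_X_add_C_pow, ← C_pow, ← C_eq_natCast, ← C_mul,
    coeff_mul_C, coeff_X_add_C_pow]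

theorem bicoeff_S1poly_pow (q : ℍ[ℝ]) (k s t : ℕ) :
    bicoeff (S1poly q ^ k) s t =
      (-q) ^ (k - s) * k.choose s * ((-star q) ^ (k - t) * k.choose t) := by
  have hcomm : Commute (-q) (-star q) := (star_comm_self (x := q)).symm.neg_left.neg_right
  rw [bicoeff, S1poly, sub_eq_add_neg, sub_eq_add_neg, ← C_neg, ← C_neg, ← C_neg,
    coeff_coeff_pow_C_X_add_C_mul_X_add_C hcomm]

end PolynomialModel

theorem evalArr_separable {n : ℕ} (u v : ℕ → ℍ[ℝ]) (hu : ∀ s, n < s → u s = 0) (p : ℍ[ℝ]) :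
    evalArr n (fun s t => u s * v t) p =
      ∑ t ∈ Finset.range (n + 1), star p ^ t * (∑ s ∈ Finset.range (n + 1), p ^ s * u s) * v t := by
  refine Finset.sum_congr rfl fun t _ => ?_
  have hsupp : ∀ s ∉ Finset.range (n + 1), p ^ s * (u s * v t) = 0 := fun s hs => by
    rw [hu s (by simpa using hs), zero_mul, mul_zero]
  rw [tsum_eq_sum hsupp, mul_assoc, Finset.sum_mul]
  simp only [mul_assoc]

/-- for the iterated star power `S_k = S_1 ⋆^L_{sp} ⋯ ⋆^L_{sp} S_1` (k factors),
`S_k(p) = ∑_{j=0}^k (−1)^j C(k,j) p̄^{k−j} (∑_{i=0}^k C(k,i) p^i (−q)^{k−i}) q̄^j`. -/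
theorem stmt8 (q : ℍ[ℝ]) (k : ℕ) (hk : 1 ≤ k) :
    ∀ p : ℍ[ℝ],
      evalArr k ((fun c => coeffMul c (S1arr q))^[k - 1] (S1arr q)) p =
        ∑ j ∈ Finset.range (k + 1),
          ((-1 : ℝ) ^ j * (k.choose j : ℝ)) •
            ((star p) ^ (k - j) *
              (∑ i ∈ Finset.range (k + 1), (k.choose i : ℝ) • (p ^ i * (-q) ^ (k - i))) *
              (star q) ^ j) := by
  intro p
  have hcoeff : (fun c => coeffMul c (S1arr q))^[k - 1] (S1arr q) =
      fun s t => ((-q) ^ (k - s) * k.choose s) * ((-star q) ^ (k - t) * k.choose t) := by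
    funext s t
    rw [iterate_coeffMul_S1arr, Nat.sub_add_cancel hk, bicoeff_S1poly_pow]
  rw [hcoeff, evalArr_separable _ _ fun s hs => by
    rw [Nat.choose_eq_zero_of_lt hs, Nat.cast_zero, mul_zero], ← Finset.sum_range_reflect]
  refine Finset.sum_congr rfl fun j hj => ?_
  have hjk : j ≤ k := Nat.le_of_lt_succ (Finset.mem_range.mp hj)
  have hinner : ∑ s ∈ Finset.range (k + 1), p ^ s * ((-q) ^ (k - s) * k.choose s) =
      ∑ i ∈ Finset.range (k + 1), (k.choose i : ℝ) • (p ^ i * (-q) ^ (k - i)) :=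
    Finset.sum_congr rfl fun s _ => by rw [Nat.cast_smul_eq_nsmul, nsmul_eq_mul', mul_assoc]
  have hneg : (-star q) ^ j = (-1 : ℝ) ^ j • star q ^ j := by
    rw [← smul_pow, neg_one_smul]
  rw [Nat.add_sub_cancel, Nat.sub_sub_self hjk, Nat.choose_symm hjk, hinner, hneg,
    ← nsmul_eq_mul', ← Nat.cast_smul_eq_nsmul ℝ, smul_smul, mul_smul_comm, mul_comm]
end
end

section
/- Pointwise evaluation bound on the S-polyregular Bargmann space of second kind: let k ∈ ℕ and let (c_j)_{j∈ℕ} be a sequence in ℍ with ∑_{j=0}^∞ j!·|c_j|² < ∞. Then for every q ∈ ℍ the series g(q) = ∑_{j=0}^∞ H^Q_{j,k}(q,q̄)·c_j converges absolutely and satisfies |g(q)| ≤ e^{|q|²/2} · (k!·∑_{j=0}^∞ j!·|c_j|²)^{1/2}. -/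
open scoped Quaternion

noncomputable section

/-- The quaternionic Hermite polynomial `H^Q_{m,n}(q,q̄)`. -/
def HQ (m n : ℕ) (q qb : ℍ[ℝ]) : ℍ[ℝ] :=
  ((m.factorial : ℝ) * (n.factorial : ℝ)) •
    ∑ j ∈ Finset.range (min m n + 1),
      ((-1 : ℝ) ^ j / ((j.factorial : ℝ) * ((m - j).factorial : ℝ) * ((n - j).factorial : ℝ))) •
        (q ^ (m - j) * qb ^ (n - j))

/-!
Clearing denominators, `H^Q_{m,n}(x, y) = ∑_j (-1)^j j! C(m,j) C(n,j) x^{m-j} y^{n-j}` is Itô's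
complex Hermite polynomial `H_{m,n}(x, y)`. For commuting `x`, `y` in a Banach algebra it satisfies
`H_{m+1,n} = x H_{m,n} - n H_{m,n-1}`, and summation by parts in `m` turns this into
`∑_m H_{m,n+1} H_{n+1,m} / m! = (n + 1) ∑_m H_{m,n} H_{n,m} / m!`; hence
`∑_m H_{m,n}(x, y) H_{n,m}(x, y) / m! = n! e^{xy}`. For `y = q̄` the factor `H_{n,m}(q, q̄)` is the
conjugate of `H_{m,n}(q, q̄)`, so `∑_m |H_{m,k}(q, q̄)|² / m! = k! e^{|q|²}`, and the bound is the
Cauchy–Schwarz inequality for the weights `m!` and `1 / m!`.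
-/

open Finset

lemma summable_and_tsum_sqrt_mul_sqrt_le {ι : Type*} {f g : ι → ℝ} (hf₀ : ∀ i, 0 ≤ f i)
    (hg₀ : ∀ i, 0 ≤ g i) (hf : Summable f) (hg : Summable g) :
    Summable (fun i => √(f i) * √(g i)) ∧
      ∑' i, √(f i) * √(g i) ≤ √(∑' i, f i) * √(∑' i, g i) := by
  have hfin : ∀ s : Finset ι, ∑ i ∈ s, √(f i) * √(g i) ≤ √(∑' i, f i) * √(∑' i, g i) :=
    fun s => (Real.sum_sqrt_mul_sqrt_le s hf₀ hg₀).trans <| by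
      gcongr
      exacts [hf.sum_le_tsum s fun i _ => hf₀ i, hg.sum_le_tsum s fun i _ => hg₀ i]
  have hsum := summable_of_sum_le (fun i => by positivity) hfin
  exact ⟨hsum, hsum.tsum_le_of_sum_le hfin⟩

lemma hasSum_sub_of_hasSum_sub_succ {G : Type*} [AddCommGroup G] [TopologicalSpace G]
    [IsTopologicalAddGroup G] {v w : ℕ → G} {e : G} (hv : Summable v) (hw : w 0 = 0)
    (h : HasSum (fun m => v m - w (m + 1)) e) : HasSum (fun m => v m - w m) e := by
  have hsucc : HasSum (fun m => w (m + 1)) (∑' m, v m - e) := by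
    simpa using hv.hasSum.sub h
  have hw' : HasSum w (∑' m, v m - e) := by
    simpa [hw] using (hasSum_nat_add_iff 1).1 hsucc
  simpa using hv.hasSum.sub hw'

def itoHermiteCoeff (m n j : ℕ) : ℝ := (-1) ^ j * (j.factorial * m.choose j * n.choose j : ℕ)

lemma itoHermiteCoeff_comm (m n j : ℕ) : itoHermiteCoeff m n j = itoHermiteCoeff n m j := by
  simp only [itoHermiteCoeff, mul_right_comm _ (m.choose j)]

lemma itoHermiteCoeff_eq_zero_of_lt {n j : ℕ} (h : n < j) (m : ℕ) : itoHermiteCoeff m n j = 0 := by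
  simp [itoHermiteCoeff, Nat.choose_eq_zero_of_lt h]

lemma itoHermiteCoeff_eq_zero_of_min_lt {m n j : ℕ} (h : min m n < j) :
    itoHermiteCoeff m n j = 0 := by
  rcases min_lt_iff.1 h with hm | hn
  · rw [itoHermiteCoeff_comm, itoHermiteCoeff_eq_zero_of_lt hm]
  · exact itoHermiteCoeff_eq_zero_of_lt hn m

lemma itoHermiteCoeff_eq_factorial_div {m n j : ℕ} (hm : j ≤ m) (hn : j ≤ n) :
    itoHermiteCoeff m n j = m.factorial * n.factorial *
      ((-1) ^ j / (j.factorial * (m - j).factorial * (n - j).factorial)) := by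
  rw [itoHermiteCoeff, ← Nat.choose_mul_factorial_mul_factorial hm,
    ← Nat.choose_mul_factorial_mul_factorial hn]
  push_cast
  field_simp

lemma itoHermiteCoeff_succ_succ (m n j : ℕ) :
    itoHermiteCoeff m (n + 1) (j + 1) + m * itoHermiteCoeff (m - 1) n j =
      itoHermiteCoeff m n (j + 1) := by
  have hm : ((j : ℝ) + 1) * m.choose (j + 1) = m * (m - 1).choose j := by
    cases m with
    | zero => simp
    | succ m => exact_mod_cast (mul_comm _ _).trans (Nat.add_one_mul_choose_eq m j).symm
  simp only [itoHermiteCoeff, Nat.choose_succ_succ' n j, Nat.factorial_succ]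
  push_cast
  linear_combination (-(-1 : ℝ) ^ j * j.factorial * n.choose j) * hm

lemma abs_itoHermiteCoeff_le {m n j : ℕ} (hj : j ≤ n) :
    |itoHermiteCoeff m n j| ≤ n.factorial * 2 ^ (m + n) := by
  have h : j.factorial * m.choose j * n.choose j ≤ n.factorial * 2 ^ (m + n) := by
    rw [pow_add, ← mul_assoc]
    exact Nat.mul_le_mul (Nat.mul_le_mul (Nat.factorial_le hj) (Nat.choose_le_two_pow m j))
      (Nat.choose_le_two_pow n j)
  simp only [itoHermiteCoeff, abs_mul, abs_pow, abs_neg, abs_one, one_pow, one_mul, Nat.abs_cast]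
  exact_mod_cast h

section Algebra

variable {A : Type*} [Ring A] [Algebra ℝ A]

def itoHermite (x y : A) (m n : ℕ) : A :=
  ∑ j ∈ range (n + 1), itoHermiteCoeff m n j • (x ^ (m - j) * y ^ (n - j))

variable {x y : A}

lemma itoHermite_eq_sum_range {N : ℕ} (m n : ℕ) (hN : min m n < N) :
    itoHermite x y m n = ∑ j ∈ range N, itoHermiteCoeff m n j • (x ^ (m - j) * y ^ (n - j)) := by
  have hmin : ∀ K, min m n < K → ∑ j ∈ range K, itoHermiteCoeff m n j • (x ^ (m - j) * y ^ (n - j))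
      = ∑ j ∈ range (min m n + 1), itoHermiteCoeff m n j • (x ^ (m - j) * y ^ (n - j)) :=
    fun K hK => (sum_subset (range_subset_range.2 hK) fun j _ hj => by
      rw [itoHermiteCoeff_eq_zero_of_min_lt (by simp at hj; omega), zero_smul]).symm
  rw [itoHermite, hmin _ (by omega), hmin N hN]

lemma itoHermite_zero_right (x y : A) (m : ℕ) : itoHermite x y m 0 = x ^ m := by
  simp [itoHermite, itoHermiteCoeff]

lemma itoHermite_swap (hxy : Commute x y) (m n : ℕ) :
    itoHermite y x n m = itoHermite x y m n := by
  rw [itoHermite_eq_sum_range n m (N := m + n + 1) (by omega),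
    itoHermite_eq_sum_range m n (N := m + n + 1) (by omega)]
  refine sum_congr rfl fun j _ => ?_
  rw [itoHermiteCoeff_comm, (hxy.pow_pow _ _).eq]

lemma itoHermite_zero_left (hxy : Commute x y) (n : ℕ) : itoHermite x y 0 n = y ^ n := by
  rw [itoHermite_swap hxy.symm, itoHermite_zero_right]

lemma Commute.itoHermite_right {z : A} (hx : Commute z x) (hy : Commute z y) (m n : ℕ) :
    Commute z (itoHermite x y m n) :=
  Commute.sum_right _ _ _ fun _ _ => ((hx.pow_right _).mul_right (hy.pow_right _)).smul_right _

lemma itoHermite_succ_right (hxy : Commute x y) (m n : ℕ) :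
    itoHermite x y m (n + 1) = y * itoHermite x y m n - (m : ℝ) • itoHermite x y (m - 1) n := by
  have hy : y * itoHermite x y m n =
      ∑ j ∈ range (n + 2), itoHermiteCoeff m n j • (x ^ (m - j) * y ^ (n + 1 - j)) := by
    rw [sum_range_succ, itoHermiteCoeff_eq_zero_of_lt n.lt_succ_self, zero_smul, add_zero,
      itoHermite, mul_sum]
    refine sum_congr rfl fun j hj => ?_
    rw [mul_smul_comm, ← mul_assoc, ((hxy.symm.pow_right _).eq), mul_assoc, ← pow_succ',
      Nat.sub_add_comm (Nat.lt_succ_iff.1 (mem_range.1 hj))]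
  rw [eq_sub_iff_add_eq, hy, itoHermite, itoHermite, smul_sum, sum_range_succ' _ (n + 1),
    sum_range_succ' _ (n + 1), add_right_comm, ← sum_add_distrib]
  congr 1
  · refine sum_congr rfl fun j _ => ?_
    rw [smul_smul, Nat.sub_sub, add_comm 1 j, Nat.add_sub_add_right, ← add_smul,
      itoHermiteCoeff_succ_succ]
  · simp [itoHermiteCoeff]

lemma itoHermite_succ_left (hxy : Commute x y) (m n : ℕ) :
    itoHermite x y (m + 1) n = x * itoHermite x y m n - (n : ℝ) • itoHermite x y m (n - 1) := by
  simp only [itoHermite_swap hxy.symm]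
  exact itoHermite_succ_right hxy.symm n m

end Algebra

section Normed

variable {A : Type*} [NormedRing A] [NormedAlgebra ℝ A] [NormOneClass A] {x y : A}

lemma norm_itoHermite_le {B : ℝ} (hB : 1 ≤ B) (hx : ‖x‖ ≤ B) (hy : ‖y‖ ≤ B) (m n : ℕ) :
    ‖itoHermite x y m n‖ ≤ (n + 1) * n.factorial * (2 * B) ^ (m + n) := by
  have hterm : ∀ j ∈ range (n + 1),
      ‖itoHermiteCoeff m n j • (x ^ (m - j) * y ^ (n - j))‖ ≤ n.factorial * (2 * B) ^ (m + n) := by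
    intro j hj
    have hxy : ‖x ^ (m - j) * y ^ (n - j)‖ ≤ B ^ (m + n) :=
      calc ‖x ^ (m - j) * y ^ (n - j)‖ ≤ ‖x‖ ^ (m - j) * ‖y‖ ^ (n - j) :=
            (norm_mul_le _ _).trans (mul_le_mul (norm_pow_le _ _) (norm_pow_le _ _)
              (norm_nonneg _) (by positivity))
        _ ≤ B ^ (m - j) * B ^ (n - j) := by gcongr
        _ ≤ B ^ (m + n) := by rw [← pow_add]; exact pow_le_pow_right₀ hB (by omega)
    rw [norm_smul, Real.norm_eq_abs, mul_pow, ← mul_assoc]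
    exact mul_le_mul (abs_itoHermiteCoeff_le (Nat.lt_succ_iff.1 (mem_range.1 hj))) hxy
      (norm_nonneg _) (by positivity)
  calc ‖itoHermite x y m n‖ ≤ ∑ j ∈ range (n + 1), (n.factorial * (2 * B) ^ (m + n) : ℝ) :=
        (norm_sum_le _ _).trans (sum_le_sum hterm)
    _ = (n + 1) * n.factorial * (2 * B) ^ (m + n) := by simp [mul_assoc]

lemma summable_itoHermite_mul_itoHermite [CompleteSpace A] (hxy : Commute x y) (a b : ℕ) :
    Summable fun m : ℕ => (m.factorial : ℝ)⁻¹ • (itoHermite x y m a * itoHermite x y b m) := by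
  set B := 1 + ‖x‖ + ‖y‖
  have hB : 1 ≤ B := by simp only [B]; linarith [norm_nonneg x, norm_nonneg y]
  have hxB : ‖x‖ ≤ B := by simp only [B]; linarith [norm_nonneg y]
  have hyB : ‖y‖ ≤ B := by simp only [B]; linarith [norm_nonneg x]
  set C := (a + 1) * a.factorial * (2 * B) ^ a * ((b + 1) * b.factorial * (2 * B) ^ b)
  refine .of_norm_bounded ((Real.summable_pow_div_factorial ((2 * B) ^ 2)).mul_left C) fun m => ?_
  rw [norm_smul, norm_inv, RCLike.norm_natCast, inv_mul_eq_div, itoHermite_swap hxy.symm m b,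
    ← mul_div_assoc]
  gcongr
  calc ‖itoHermite x y m a * itoHermite y x m b‖
      ≤ ((a + 1) * a.factorial * (2 * B) ^ (m + a)) * ((b + 1) * b.factorial * (2 * B) ^ (m + b)) :=
        (norm_mul_le _ _).trans (mul_le_mul (norm_itoHermite_le hB hxB hyB m a)
          (norm_itoHermite_le hB hyB hxB m b) (norm_nonneg _) (by positivity))
    _ = C * ((2 * B) ^ 2) ^ m := by
        simp only [C]; generalize 2 * B = D; ring

theorem hasSum_itoHermite_mul_itoHermite [CompleteSpace A] (hxy : Commute x y) (n : ℕ) :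
    HasSum (fun m : ℕ => (m.factorial : ℝ)⁻¹ • (itoHermite x y m n * itoHermite x y n m))
      ((n.factorial : ℝ) • NormedSpace.exp (x * y)) := by
  induction n with
  | zero =>
    simpa [itoHermite_zero_right, itoHermite_zero_left hxy, ← hxy.mul_pow] using
      NormedSpace.exp_series_hasSum_exp' (𝕂 := ℝ) (x * y)
  | succ n ih =>
    set h := itoHermite x y
    set v : ℕ → A := fun m => (m.factorial : ℝ)⁻¹ • (x * (h m (n + 1) * h n m))
    set w : ℕ → A := fun m => (m.factorial : ℝ)⁻¹ • ((m : ℝ) • (h m (n + 1) * h n (m - 1)))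
    -- summation by parts: the `n + 1` term is `v m - w m`, and `v m - w (m + 1)` is `n + 1`
    -- times the `n` term
    have hv : Summable v := by
      simpa only [v, mul_smul_comm] using
        (summable_itoHermite_mul_itoHermite hxy (n + 1) n).mul_left x
    have hvw : ∀ m, v m - w (m + 1) = ((n : ℝ) + 1) • ((m.factorial : ℝ)⁻¹ • (h m n * h n m)) := by
      intro m
      have hfac : ((m + 1).factorial : ℝ)⁻¹ * (m + 1 : ℕ) = (m.factorial : ℝ)⁻¹ := by
        rw [Nat.factorial_succ, Nat.cast_mul, mul_inv, mul_comm, ← mul_assoc,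
          mul_inv_cancel₀ (by positivity), one_mul]
      simp only [v, w, smul_smul, hfac, Nat.add_sub_cancel, h, itoHermite_succ_left hxy m (n + 1)]
      push_cast
      simp only [sub_mul, smul_mul_assoc, mul_assoc]
      module
    have hdiag : ∀ m, (m.factorial : ℝ)⁻¹ • (h m (n + 1) * h (n + 1) m) = v m - w m := by
      intro m
      have hcomm : h m (n + 1) * x = x * h m (n + 1) :=
        ((Commute.refl x).itoHermite_right hxy m (n + 1)).eq.symm
      simp only [v, w, h, itoHermite_succ_left hxy n m, mul_sub, mul_smul_comm, ← mul_assoc,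
        hcomm, smul_sub, smul_smul]
    have hsum : ((n + 1).factorial : ℝ) • NormedSpace.exp (x * y) =
        ((n : ℝ) + 1) • ((n.factorial : ℝ) • NormedSpace.exp (x * y)) := by
      rw [smul_smul, Nat.factorial_succ, Nat.cast_mul, Nat.cast_succ]
    simp only [hdiag, hsum]
    exact hasSum_sub_of_hasSum_sub_succ hv (by simp [w]) (by simpa only [hvw] using ih.const_smul _)

end Normed

lemma star_itoHermite (x y : ℍ[ℝ]) (m n : ℕ) :
    star (itoHermite x y m n) = itoHermite (star y) (star x) n m := by
  rw [itoHermite_eq_sum_range m n (N := m + n + 1) (by omega),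
    itoHermite_eq_sum_range n m (N := m + n + 1) (by omega), star_sum]
  refine sum_congr rfl fun j _ => ?_
  rw [Quaternion.star_smul, star_mul, star_pow, star_pow, itoHermiteCoeff_comm]

lemma HQ_eq_itoHermite (q qb : ℍ[ℝ]) (m n : ℕ) : HQ m n q qb = itoHermite q qb m n := by
  rw [HQ, itoHermite_eq_sum_range m n (min m n).lt_succ_self, smul_sum]
  refine sum_congr rfl fun j hj => ?_
  have hj : j ≤ min m n := Nat.lt_succ_iff.1 (mem_range.1 hj)
  rw [smul_smul, itoHermiteCoeff_eq_factorial_div (hj.trans (min_le_left m n))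
    (hj.trans (min_le_right m n))]

theorem hasSum_norm_itoHermite_sq_div_factorial (q : ℍ[ℝ]) (n : ℕ) :
    HasSum (fun m : ℕ => ‖itoHermite q (star q) m n‖ ^ 2 / m.factorial)
      (n.factorial * Real.exp (‖q‖ ^ 2)) := by
  have hq : Commute q (star q) := (IsStarNormal.star_comm_self (x := q)).symm
  have hstar : ∀ m, itoHermite q (star q) n m = star (itoHermite q (star q) m n) := fun m => by
    rw [star_itoHermite, star_star]
  have hnorm : ∀ p : ℍ[ℝ], p * star p = ((‖p‖ ^ 2 : ℝ) : ℍ[ℝ]) := fun p => by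
    rw [Quaternion.self_mul_star, Quaternion.normSq_eq_norm_mul_self, sq]
  have hexp : NormedSpace.exp ((‖q‖ ^ 2 : ℝ) : ℍ[ℝ]) = (Real.exp (‖q‖ ^ 2) : ℍ[ℝ]) := by
    rw [Real.exp_eq_exp_ℝ, ← Quaternion.algebraMap_def, NormedSpace.algebraMap_exp_comm]
  have h := hasSum_itoHermite_mul_itoHermite hq n
  simp only [hexp, hstar, hnorm, ← Quaternion.coe_smul] at h
  simpa [div_eq_inv_mul] using Quaternion.hasSum_coe.1 h

/-- pointwise evaluation bound on the S-polyregular Bargmann space of second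
kind: `g(q) = ∑_j H^Q_{j,k}(q,q̄) c_j` converges absolutely and
`|g(q)| ≤ e^{|q|²/2} (k! ∑_j j!|c_j|²)^{1/2}`. -/
theorem stmt10 (k : ℕ) (c : ℕ → ℍ[ℝ])
    (hc : Summable fun j : ℕ => (j.factorial : ℝ) * ‖c j‖ ^ 2) (q : ℍ[ℝ]) :
    Summable (fun j : ℕ => ‖HQ j k q (star q) * c j‖) ∧
      ‖∑' j : ℕ, HQ j k q (star q) * c j‖ ≤
        Real.exp (‖q‖ ^ 2 / 2) *
          Real.sqrt ((k.factorial : ℝ) * ∑' j : ℕ, (j.factorial : ℝ) * ‖c j‖ ^ 2) := by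
  have hH := hasSum_norm_itoHermite_sq_div_factorial q k
  have hterm : ∀ j, ‖HQ j k q (star q) * c j‖ =
      √(‖itoHermite q (star q) j k‖ ^ 2 / j.factorial) * √(j.factorial * ‖c j‖ ^ 2) := by
    intro j
    have hj : (j.factorial : ℝ) ≠ 0 := by positivity
    rw [HQ_eq_itoHermite, norm_mul, ← Real.sqrt_mul (by positivity), div_mul_eq_mul_div,
      mul_div_assoc, mul_div_cancel_left₀ _ hj, ← mul_pow, Real.sqrt_sq (by positivity)]
  obtain ⟨hsum, hle⟩ := summable_and_tsum_sqrt_mul_sqrt_le (fun j => by positivity)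
    (fun j => by positivity) hH.summable hc
  simp only [← hterm] at hsum hle
  refine ⟨hsum, (norm_tsum_le_tsum_norm hsum).trans (hle.trans_eq ?_)⟩
  rw [hH.tsum_eq, Real.sqrt_mul (by positivity), Real.sqrt_mul (by positivity),
    ← Real.exp_half]
  ring
end
end
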